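/- arXiv:2203.02375 — 3 statements merged into one kernel-verified Lean document; each statement's English description precedes it below -/
import Mathlib

section
/- Fix d ≥ 1 and C₀ > 0, and let GL⁺(d) := {F ∈ ℝ^{d×d} : det F > 0}. Let W^cpl : GL⁺(d) × [0,∞) → ℝ be such that for every F ∈ GL⁺(d) and θ ≥ 0 the map W^cpl(·,θ) is differentiable at F with Frobenius gradient ∂_F W^cpl(F,θ) ∈ ℝ^{d×d}, and suppose: (i) for each F ∈ GL⁺(d), the map θ ↦ ∂_F W^cpl(F,θ) is continuous on [0,∞) with ∂_F W^cpl(F,0) = 0 and is differentiable on (0,∞) with |∂_θ ∂_F W^cpl(F,θ)| ≤ C₀(1+|F|)/max{θ,1} for all θ > 0; (ii) |W^cpl(F,θ) − W^cpl(F̃,θ)| ≤ C₀(1+|F|+|F̃|)|F−F̃| for all F, F̃ ∈ GL⁺(d) and θ ≥ 0. Then |∂_F W^cpl(F,θ)| ≤ 2C₀ · min{θ,1} · (1+|F|) for all F ∈ GL⁺(d) and θ ≥ 0. -/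
/-!
For `θ ≤ 1`: the gradient vanishes at `θ = 0` and its `θ`-derivative is bounded by
`C₀ (1 + |F|)`, so the mean value inequality gives `|∂_F W^cpl(F,θ)| ≤ C₀ (1 + |F|) θ`.
For `θ ≥ 1`: with `G = ∂_F W^cpl(F,θ)`, the map `t ↦ W^cpl(F + t G, θ)` has derivative `|G|²`
at `t = 0`, while by (ii) its difference quotients are at most `C₀ (1 + |F + t G| + |F|) |G|`;
letting `t → 0⁺` gives `|G| ≤ C₀ (1 + 2 |F|)`.
-/

open Matrix Set

attribute [local instance] Matrix.normedAddCommGroup Matrix.normedSpace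

/-- Frobenius inner product `⟨A,B⟩ = trace(AᵀB) = ∑ᵢⱼ Aᵢⱼ Bᵢⱼ`. -/
def minner {d : ℕ} (A B : Matrix (Fin d) (Fin d) ℝ) : ℝ := ∑ i, ∑ j, A i j * B i j

/-- Frobenius norm. -/
noncomputable def frobNorm {d : ℕ} (A : Matrix (Fin d) (Fin d) ℝ) : ℝ :=
  Real.sqrt (minner A A)

open Filter Topology

theorem norm_sub_le_of_hasDerivAt_Ioo {E : Type*} [NormedAddCommGroup E] [NormedSpace ℝ E]
    {f f' : ℝ → E} {a b C : ℝ} (hab : a ≤ b) (hf : ContinuousOn f (Icc a b))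
    (hf' : ∀ x ∈ Ioo a b, HasDerivAt f (f' x) x) (bound : ∀ x ∈ Ioo a b, ‖f' x‖ ≤ C) :
    ‖f b - f a‖ ≤ C * (b - a) := by
  rcases hab.eq_or_lt with rfl | hab
  · simp
  -- the mean value inequality on `[ε, b]`, then `ε → a⁺`
  have hε : ∀ ε ∈ Ioo a b, ‖f b - f ε‖ ≤ C * (b - ε) := fun ε hε =>
    norm_image_sub_le_of_norm_deriv_right_le_segment (hf.mono (Icc_subset_Icc_left hε.1.le))
      (fun x hx => (hf' x ⟨hε.1.trans_le hx.1, hx.2⟩).hasDerivWithinAt)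
      (fun x hx => bound x ⟨hε.1.trans_le hx.1, hx.2⟩) b (right_mem_Icc.2 hε.2.le)
  have hlim : Tendsto f (𝓝[Ioo a b] a) (𝓝 (f a)) :=
    (hf a (left_mem_Icc.2 hab.le)).mono_left (nhdsWithin_mono a Ioo_subset_Icc_self)
  have : (𝓝[Ioo a b] a).NeBot := left_nhdsWithin_Ioo_neBot hab
  refine le_of_tendsto_of_tendsto ((tendsto_const_nhds.sub hlim).norm)
    (tendsto_const_nhds.mul (tendsto_const_nhds.sub (tendsto_nhdsWithin_of_tendsto_nhds
      tendsto_id))) (eventually_nhdsWithin_of_forall hε)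

theorem abs_le_of_hasDerivAt_of_abs_sub_le {φ L : ℝ → ℝ} {x a c : ℝ} (hφ : HasDerivAt φ a x)
    (hL : Tendsto L (𝓝[>] x) (𝓝 c))
    (hbound : ∀ᶠ t in 𝓝[>] x, |φ t - φ x| ≤ L t * (t - x)) : |a| ≤ c := by
  have hslope : Tendsto (fun t => |slope φ x t|) (𝓝[>] x) (𝓝 |a|) :=
    ((hasDerivAt_iff_tendsto_slope.mp hφ).mono_left
      (nhdsWithin_mono x fun _ ht => ne_of_gt ht)).abs
  refine le_of_tendsto_of_tendsto hslope hL ?_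
  filter_upwards [hbound, self_mem_nhdsWithin] with t ht (hxt : x < t)
  rw [slope_def_field, abs_div, abs_of_pos (sub_pos.2 hxt), div_le_iff₀ (sub_pos.2 hxt)]
  exact ht

-- Matrices carry the sup norm here, so analysis on `frobNorm` goes through this isometry.
noncomputable def frobFlatten (d : ℕ) :
    Matrix (Fin d) (Fin d) ℝ →L[ℝ] EuclideanSpace ℝ (Fin d × Fin d) :=
  LinearMap.toContinuousLinearMap
    { toFun := fun A => WithLp.toLp 2 fun p => A p.1 p.2
      map_add' := fun _ _ => rfl
      map_smul' := fun _ _ => rfl }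

section Frobenius

variable {d : ℕ}

theorem frobNorm_eq_norm_frobFlatten (A : Matrix (Fin d) (Fin d) ℝ) :
    frobNorm A = ‖frobFlatten d A‖ := by
  rw [EuclideanSpace.norm_eq, frobNorm, minner, Fintype.sum_prod_type]
  simp only [Real.norm_eq_abs, sq_abs]
  simp only [sq]
  rfl

theorem frobNorm_nonneg (A : Matrix (Fin d) (Fin d) ℝ) : 0 ≤ frobNorm A :=
  Real.sqrt_nonneg _

theorem minner_self_eq_frobNorm_sq (A : Matrix (Fin d) (Fin d) ℝ) :
    minner A A = frobNorm A ^ 2 :=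
  (Real.sq_sqrt <| Finset.sum_nonneg fun _ _ => Finset.sum_nonneg fun _ _ =>
    mul_self_nonneg _).symm

theorem frobNorm_smul (t : ℝ) (A : Matrix (Fin d) (Fin d) ℝ) :
    frobNorm (t • A) = |t| * frobNorm A := by
  rw [frobNorm_eq_norm_frobFlatten, frobNorm_eq_norm_frobFlatten, map_smul, norm_smul,
    Real.norm_eq_abs]

@[fun_prop]
theorem continuous_frobNorm : Continuous (frobNorm : Matrix (Fin d) (Fin d) ℝ → ℝ) := by
  simpa only [← frobNorm_eq_norm_frobFlatten] using (frobFlatten d).continuous.norm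

theorem frobNorm_sub_le_of_hasDerivAt_Ioo {f f' : ℝ → Matrix (Fin d) (Fin d) ℝ} {a b C : ℝ}
    (hab : a ≤ b) (hf : ContinuousOn f (Icc a b)) (hf' : ∀ x ∈ Ioo a b, HasDerivAt f (f' x) x)
    (bound : ∀ x ∈ Ioo a b, frobNorm (f' x) ≤ C) : frobNorm (f b - f a) ≤ C * (b - a) := by
  rw [frobNorm_eq_norm_frobFlatten, map_sub]
  exact norm_sub_le_of_hasDerivAt_Ioo hab ((frobFlatten d).continuous.comp_continuousOn hf)
    (fun x hx => (frobFlatten d).hasFDerivAt.comp_hasDerivAt x (hf' x hx))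
    (fun x hx => frobNorm_eq_norm_frobFlatten (f' x) ▸ bound x hx)

theorem frobNorm_gradient_le_of_abs_sub_le {W L : Matrix (Fin d) (Fin d) ℝ → ℝ}
    {F G : Matrix (Fin d) (Fin d) ℝ} (hW : DifferentiableAt ℝ W F)
    (hgrad : ∀ H, fderiv ℝ W F H = minner G H) (hL : ContinuousAt L F) (hLF : 0 ≤ L F)
    (hbound : ∀ᶠ F' in 𝓝 F, |W F' - W F| ≤ L F' * frobNorm (F' - F)) :
    frobNorm G ≤ L F := by
  rcases (frobNorm_nonneg G).eq_or_lt with hG | hG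
  · exact hG ▸ hLF
  -- test the bound along the ray `t ↦ F + t • G`, on which `W` grows at rate `|G|²`
  have hray : Continuous fun t : ℝ => F + t • G := by fun_prop
  have hray0 : F + (0 : ℝ) • G = F := by simp
  have hφ : HasDerivAt (fun t : ℝ => W (F + t • G)) (frobNorm G ^ 2) 0 := by
    have hpath : HasDerivAt (fun t : ℝ => F + t • G) G 0 := by
      have := ((hasDerivAt_id' (0 : ℝ)).smul_const G).const_add F
      rwa [one_smul] at this
    rw [← minner_self_eq_frobNorm_sq, ← hgrad]
    exact hW.hasFDerivAt.comp_hasDerivAt_of_eq 0 hpath hray0.symm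
  have hLray : Tendsto (fun t : ℝ => L (F + t • G) * frobNorm G) (𝓝[>] 0)
      (𝓝 (L F * frobNorm G)) :=
    ((hL.tendsto.comp (hray.tendsto' 0 F hray0)).mul_const _).mono_left nhdsWithin_le_nhds
  have hbound_ray : ∀ᶠ t in 𝓝[>] (0 : ℝ), |W (F + t • G) - W (F + (0 : ℝ) • G)|
      ≤ L (F + t • G) * frobNorm G * (t - 0) := by
    filter_upwards [nhdsWithin_le_nhds (hray.tendsto' 0 F hray0 hbound), self_mem_nhdsWithin]
      with t (ht : _ ≤ _ * frobNorm (F + t • G - F)) (htpos : 0 < t)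
    rw [add_sub_cancel_left, frobNorm_smul, abs_of_pos htpos] at ht
    rw [hray0, sub_zero]
    exact ht.trans_eq (by ring)
  have hsq := abs_le_of_hasDerivAt_of_abs_sub_le hφ hLray hbound_ray
  rw [abs_of_nonneg (sq_nonneg _), sq] at hsq
  exact le_of_mul_le_mul_right hsq hG

end Frobenius

theorem coupling_stress_bound_general {d : ℕ} (C₀ : ℝ) (hC₀ : 0 < C₀)
    (Wcpl : Matrix (Fin d) (Fin d) ℝ → ℝ → ℝ)
    -- `g F θ = ∂_F W^cpl(F, θ)`, the Frobenius gradient of `W^cpl(·,θ)` at `F`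
    (g : Matrix (Fin d) (Fin d) ℝ → ℝ → Matrix (Fin d) (Fin d) ℝ)
    (hgrad : ∀ F θ, 0 < F.det → 0 ≤ θ →
      DifferentiableAt ℝ (fun F' => Wcpl F' θ) F ∧
      ∀ H, fderiv ℝ (fun F' => Wcpl F' θ) F H = minner (g F θ) H)
    -- (i) continuity in `θ` on `[0,∞)`, value `0` at `θ = 0`, and the derivative bound
    (hcont : ∀ F, 0 < F.det → ContinuousOn (fun θ => g F θ) (Ici (0 : ℝ)))
    (hzero : ∀ F, 0 < F.det → g F 0 = 0)
    (hderiv : ∀ F, 0 < F.det → ∀ θ : ℝ, 0 < θ →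
      ∃ g' : Matrix (Fin d) (Fin d) ℝ,
        HasDerivAt (fun s => g F s) g' θ ∧
        frobNorm g' ≤ C₀ * (1 + frobNorm F) / max θ 1)
    -- (ii) the Lipschitz-type estimate on `W^cpl`
    (hlip : ∀ F F' : Matrix (Fin d) (Fin d) ℝ, 0 < F.det → 0 < F'.det →
      ∀ θ : ℝ, 0 ≤ θ →
      |Wcpl F θ - Wcpl F' θ| ≤ C₀ * (1 + frobNorm F + frobNorm F') * frobNorm (F - F')) :
    ∀ F θ, 0 < F.det → 0 ≤ θ →
      frobNorm (g F θ) ≤ 2 * C₀ * min θ 1 * (1 + frobNorm F) := by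
  intro F θ hF hθ
  have hM := frobNorm_nonneg F
  choose! g' hg' hg'_le using hderiv F hF
  have h_small : frobNorm (g F θ) ≤ C₀ * (1 + frobNorm F) * θ := by
    have hmvt := frobNorm_sub_le_of_hasDerivAt_Ioo hθ ((hcont F hF).mono Icc_subset_Ici_self)
      (fun s hs => hg' s hs.1)
      (fun s hs => (hg'_le s hs.1).trans (div_le_self (by positivity) (le_max_right s 1)))
    rwa [hzero F hF, sub_zero, sub_zero] at hmvt
  have h_large : frobNorm (g F θ) ≤ C₀ * (1 + frobNorm F + frobNorm F) := by
    refine frobNorm_gradient_le_of_abs_sub_le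
      (L := fun F' => C₀ * (1 + frobNorm F' + frobNorm F)) (hgrad F θ hF hθ).1
      (hgrad F θ hF hθ).2 (by fun_prop) (by positivity) ?_
    filter_upwards [(isOpen_lt continuous_const continuous_id.matrix_det).mem_nhds hF]
      with F' hF'
    exact hlip F' F hF' hF θ hθ
  rcases le_total θ 1 with hθ1 | hθ1
  · rw [min_eq_left hθ1]
    nlinarith [mul_nonneg (mul_nonneg hC₀.le hθ) (by linarith : (0:ℝ) ≤ 1 + frobNorm F)]
  · rw [min_eq_right hθ1]
    nlinarith

/-- Estimate on the coupling potential: `|∂_F W^cpl(F,θ)| ≤ 2C₀ (θ ∧ 1)(1 + |F|)`. -/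
theorem coupling_stress_bound {d : ℕ} (hd : 1 ≤ d) (C₀ : ℝ) (hC₀ : 0 < C₀)
    (Wcpl : Matrix (Fin d) (Fin d) ℝ → ℝ → ℝ)
    -- `g F θ = ∂_F W^cpl(F, θ)`, the Frobenius gradient of `W^cpl(·,θ)` at `F`
    (g : Matrix (Fin d) (Fin d) ℝ → ℝ → Matrix (Fin d) (Fin d) ℝ)
    (hgrad : ∀ F θ, 0 < F.det → 0 ≤ θ →
      DifferentiableAt ℝ (fun F' => Wcpl F' θ) F ∧
      ∀ H, fderiv ℝ (fun F' => Wcpl F' θ) F H = minner (g F θ) H)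
    -- (i) continuity in `θ` on `[0,∞)`, value `0` at `θ = 0`, and the derivative bound
    (hcont : ∀ F, 0 < F.det → ContinuousOn (fun θ => g F θ) (Ici (0 : ℝ)))
    (hzero : ∀ F, 0 < F.det → g F 0 = 0)
    (hderiv : ∀ F, 0 < F.det → ∀ θ : ℝ, 0 < θ →
      ∃ g' : Matrix (Fin d) (Fin d) ℝ,
        HasDerivAt (fun s => g F s) g' θ ∧
        frobNorm g' ≤ C₀ * (1 + frobNorm F) / max θ 1)
    -- (ii) the Lipschitz-type estimate on `W^cpl`
    (hlip : ∀ F F' : Matrix (Fin d) (Fin d) ℝ, 0 < F.det → 0 < F'.det →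
      ∀ θ : ℝ, 0 ≤ θ →
      |Wcpl F θ - Wcpl F' θ| ≤ C₀ * (1 + frobNorm F + frobNorm F') * frobNorm (F - F')) :
    ∀ F θ, 0 < F.det → 0 ≤ θ →
      frobNorm (g F θ) ≤ 2 * C₀ * min θ 1 * (1 + frobNorm F) :=
  coupling_stress_bound_general C₀ hC₀ Wcpl g hgrad hcont hzero hderiv hlip
end

section
/- Let 0 < c₀ ≤ C₀ and let g : [0,∞) → ℝ be continuous with g(0) = 0 and twice differentiable on (0,∞) with c₀ ≤ −θ·g''(θ) ≤ C₀ for all θ > 0. Define h(θ) := g(θ) − θ·g'(θ) for θ > 0. Then lim_{θ→0⁺} θ·g'(θ) = 0, h extends continuously to θ = 0 with h(0) = 0, and c₀·θ ≤ h(θ) ≤ C₀·θ for all θ ≥ 0. -/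
/-!
The function `H θ = g θ - θ * g' θ` has derivative `-θ * g'' θ ∈ [c₀, C₀]`, so its increments
over `[a, b]` lie between `c₀ (b - a)` and `C₀ (b - a)`. Hence `H - c₀ θ` is monotone and bounded
near `0`, so `H` has a limit `L` at `0⁺`, and `θ * g' θ = g θ - H θ → -L`. A nonzero limit of
`θ * g' θ` would make `g` grow like `-L log θ` near `0`, contradicting continuity of `g` at `0`;
so `L = 0`, and letting `a → 0` in the increment bounds gives `c₀ θ ≤ H θ ≤ C₀ θ`.
-/

open Set Filter Topology

theorem tendsto_atBot_nhdsGT_zero_of_tendsto_mul_deriv {f f' : ℝ → ℝ} {ℓ : ℝ}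
    (hf : ∀ x, 0 < x → HasDerivAt f (f' x) x) (hℓ : 0 < ℓ)
    (hlim : Tendsto (fun x => x * f' x) (𝓝[>] 0) (𝓝 ℓ)) :
    Tendsto f (𝓝[>] 0) atBot := by
  obtain ⟨δ, hδ, hδℓ⟩ := mem_nhdsGT_iff_exists_Ioo_subset.1
    (hlim.eventually (eventually_gt_nhds (half_lt_self hℓ)))
  -- `f - (ℓ / 2) log` is nondecreasing near `0`, so `f` decays at least like `(ℓ / 2) log`.
  set F : ℝ → ℝ := fun x => f x - ℓ / 2 * Real.log x
  have hF : ∀ x ∈ Ioo 0 δ, HasDerivAt F (f' x - ℓ / 2 * x⁻¹) x := fun x hx =>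
    (hf x hx.1).sub ((Real.hasDerivAt_log hx.1.ne').const_mul _)
  have hF_mono : MonotoneOn F (Ioo 0 δ) := by
    refine monotoneOn_of_hasDerivWithinAt_nonneg (convex_Ioo 0 δ)
      (fun x hx => (hF x hx).continuousAt.continuousWithinAt)
      (fun x hx => (hF x (interior_subset hx)).hasDerivWithinAt) fun x hx => ?_
    rw [interior_Ioo] at hx
    have hx' : ℓ / 2 < x * f' x := hδℓ hx
    rw [sub_nonneg, ← div_eq_mul_inv, div_le_iff₀ hx.1]
    linarith
  have hmid : δ / 2 ∈ Ioo 0 δ := ⟨half_pos hδ, half_lt_self hδ⟩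
  refine tendsto_atBot_mono' _ ?_ (tendsto_atBot_add_const_left _ (F (δ / 2))
    ((tendsto_const_mul_atBot_of_pos (half_pos hℓ)).2 Real.tendsto_log_nhdsGT_zero))
  filter_upwards [Ioo_mem_nhdsGT hmid.1] with x hx
  have := hF_mono ⟨hx.1, hx.2.trans hmid.2⟩ hmid hx.2.le
  simp only [F] at this ⊢
  linarith

theorem eq_zero_of_tendsto_mul_deriv_nhdsGT_zero {f f' : ℝ → ℝ} {y ℓ : ℝ}
    (hf : ∀ x, 0 < x → HasDerivAt f (f' x) x) (hfy : Tendsto f (𝓝[>] 0) (𝓝 y))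
    (hlim : Tendsto (fun x => x * f' x) (𝓝[>] 0) (𝓝 ℓ)) : ℓ = 0 := by
  rcases lt_trichotomy ℓ 0 with hℓ | hℓ | hℓ
  · have hneg : Tendsto (fun x => x * -f' x) (𝓝[>] 0) (𝓝 (-ℓ)) := by
      simpa only [mul_neg] using hlim.neg
    exact absurd hfy.neg (not_tendsto_nhds_of_tendsto_atBot
      (tendsto_atBot_nhdsGT_zero_of_tendsto_mul_deriv (fun x hx => (hf x hx).neg)
        (neg_pos.2 hℓ) hneg) _)
  · exact hℓ
  · exact absurd hfy (not_tendsto_nhds_of_tendsto_atBot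
      (tendsto_atBot_nhdsGT_zero_of_tendsto_mul_deriv hf hℓ hlim) _)

section DerivBounds

variable {H H' : ℝ → ℝ} {c C : ℝ}

theorem mul_sub_le_sub_le_mul_sub_of_hasDerivAt (hH : ∀ x, 0 < x → HasDerivAt H (H' x) x)
    (hH' : ∀ x, 0 < x → c ≤ H' x ∧ H' x ≤ C) ⦃a b : ℝ⦄ (ha : 0 < a) (hab : a ≤ b) :
    c * (b - a) ≤ H b - H a ∧ H b - H a ≤ C * (b - a) := by
  have hcont : ContinuousOn H (Ioi 0) := fun x hx => (hH x hx).continuousAt.continuousWithinAt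
  have hdiff : DifferentiableOn ℝ H (interior (Ioi 0)) := fun x hx =>
    (hH x (interior_subset hx)).differentiableAt.differentiableWithinAt
  have hderiv : ∀ x ∈ interior (Ioi (0 : ℝ)), deriv H x = H' x := fun x hx =>
    (hH x (interior_subset hx)).deriv
  have hb : b ∈ Ioi (0 : ℝ) := ha.trans_le hab
  exact ⟨(convex_Ioi 0).mul_sub_le_image_sub_of_le_deriv hcont hdiff
      (fun x hx => hderiv x hx ▸ (hH' x (interior_subset hx)).1) a ha b hb hab,
    (convex_Ioi 0).image_sub_le_mul_sub_of_deriv_le hcont hdiff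
      (fun x hx => hderiv x hx ▸ (hH' x (interior_subset hx)).2) a ha b hb hab⟩

theorem exists_tendsto_nhdsGT_zero_of_hasDerivAt (hH : ∀ x, 0 < x → HasDerivAt H (H' x) x)
    (hH' : ∀ x, 0 < x → c ≤ H' x ∧ H' x ≤ C) : ∃ L, Tendsto H (𝓝[>] 0) (𝓝 L) := by
  have hinc := mul_sub_le_sub_le_mul_sub_of_hasDerivAt hH hH'
  set G : ℝ → ℝ := fun x => H x - c * x
  have hG_mono : MonotoneOn G (Ioo 0 1) := fun a ha b _ hab => by
    have := (hinc ha.1 hab).1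
    simp only [G]
    linarith
  have hcC : c ≤ C := (hH' 1 one_pos).1.trans (hH' 1 one_pos).2
  have hG_bdd : BddBelow (G '' Ioo 0 1) := by
    refine ⟨G 1 - (C - c), ?_⟩
    rintro _ ⟨a, ha, rfl⟩
    have := (hinc ha.1 ha.2.le).2
    simp only [G]
    nlinarith [ha.1, ha.2]
  have hG := hG_mono.tendsto_nhdsWithin_Ioo_right ⟨1 / 2, by norm_num⟩ hG_bdd
  have hid : Tendsto (fun x : ℝ => c * x) (𝓝[>] 0) (𝓝 (c * 0)) :=
    (continuous_const_mul c).continuousWithinAt.tendsto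
  exact ⟨_, by simpa [G] using hG.add hid⟩

theorem mul_le_sub_le_mul_of_tendsto_nhdsGT_zero (hH : ∀ x, 0 < x → HasDerivAt H (H' x) x)
    (hH' : ∀ x, 0 < x → c ≤ H' x ∧ H' x ≤ C) {L : ℝ} (hL : Tendsto H (𝓝[>] 0) (𝓝 L))
    {x : ℝ} (hx : 0 < x) : c * x ≤ H x - L ∧ H x - L ≤ C * x := by
  have hinc : ∀ᶠ a in 𝓝[>] 0, c * (x - a) ≤ H x - H a ∧ H x - H a ≤ C * (x - a) := by
    filter_upwards [Ioo_mem_nhdsGT hx] with a ha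
    exact mul_sub_le_sub_le_mul_sub_of_hasDerivAt hH hH' ha.1 ha.2.le
  have hsub : Tendsto (fun a => x - a) (𝓝[>] 0) (𝓝 (x - 0)) :=
    tendsto_const_nhds.sub (tendsto_id.mono_left nhdsWithin_le_nhds)
  rw [sub_zero] at hsub
  have hHx : Tendsto (fun a => H x - H a) (𝓝[>] 0) (𝓝 (H x - L)) := tendsto_const_nhds.sub hL
  exact ⟨le_of_tendsto_of_tendsto (hsub.const_mul c) hHx (hinc.mono fun _ h => h.1),
    le_of_tendsto_of_tendsto hHx (hsub.const_mul C) (hinc.mono fun _ h => h.2)⟩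

end DerivBounds

theorem HasDerivAt.sub_mul_deriv {g g' : ℝ → ℝ} {g'' x : ℝ} (hg : HasDerivAt g (g' x) x)
    (hg' : HasDerivAt g' g'' x) : HasDerivAt (fun y => g y - y * g' y) (-x * g'') x :=
  (hg.sub ((hasDerivAt_id' x).mul hg')).congr_deriv (by ring)

theorem internal_energy_bounds_general (c₀ C₀ : ℝ)
    (g g' g'' : ℝ → ℝ)
    (hgcont : ContinuousOn g (Ici (0 : ℝ)))
    (hg0 : g 0 = 0)
    (hderiv1 : ∀ θ : ℝ, 0 < θ → HasDerivAt g (g' θ) θ)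
    (hderiv2 : ∀ θ : ℝ, 0 < θ → HasDerivAt g' (g'' θ) θ)
    (hbound : ∀ θ : ℝ, 0 < θ → c₀ ≤ -θ * g'' θ ∧ -θ * g'' θ ≤ C₀) :
    Tendsto (fun θ => θ * g' θ) (𝓝[>] (0 : ℝ)) (𝓝 0) ∧
    ∃ h : ℝ → ℝ,
      (∀ θ : ℝ, 0 < θ → h θ = g θ - θ * g' θ) ∧
      h 0 = 0 ∧
      ContinuousWithinAt h (Ici (0 : ℝ)) 0 ∧
      ∀ θ : ℝ, 0 ≤ θ → c₀ * θ ≤ h θ ∧ h θ ≤ C₀ * θ := by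
  set H : ℝ → ℝ := fun θ => g θ - θ * g' θ
  have hH : ∀ θ, 0 < θ → HasDerivAt H (-θ * g'' θ) θ := fun θ hθ =>
    (hderiv1 θ hθ).sub_mul_deriv (hderiv2 θ hθ)
  obtain ⟨L, hL⟩ := exists_tendsto_nhdsGT_zero_of_hasDerivAt hH hbound
  have hg : Tendsto g (𝓝[>] 0) (𝓝 0) := by
    simpa only [hg0] using ((hgcont 0 self_mem_Ici).mono Ioi_subset_Ici_self).tendsto
  have hmul : Tendsto (fun θ => θ * g' θ) (𝓝[>] 0) (𝓝 (0 - L)) :=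
    (hg.sub hL).congr fun θ => sub_sub_cancel _ _
  obtain rfl : L = 0 := by
    simpa using eq_zero_of_tendsto_mul_deriv_nhdsGT_zero hderiv1 hg hmul
  refine ⟨by simpa using hmul, Function.update H 0 0, fun θ hθ => Function.update_of_ne hθ.ne' _ _,
    Function.update_self .., ?_, fun θ hθ => ?_⟩
  · rwa [continuousWithinAt_update_same, Ici_sdiff_left]
  obtain rfl | hθ := hθ.eq_or_lt
  · simp
  rw [Function.update_of_ne hθ.ne']
  simpa using mul_le_sub_le_mul_of_tendsto_nhdsGT_zero hH hbound hL hθ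

/-- Properties of the internal energy `h(θ) = g(θ) − θ g'(θ)` for a coupling potential `g`
with heat capacity bounds `c₀ ≤ −θ g''(θ) ≤ C₀`:  `θ g'(θ) → 0` as `θ → 0⁺`, `h` extends
continuously to `θ = 0` with value `0`, and `c₀ θ ≤ h(θ) ≤ C₀ θ` for all `θ ≥ 0`. -/
theorem internal_energy_bounds (c₀ C₀ : ℝ) (hc₀ : 0 < c₀) (hcC : c₀ ≤ C₀)
    (g g' g'' : ℝ → ℝ)
    (hgcont : ContinuousOn g (Ici (0 : ℝ)))
    (hg0 : g 0 = 0)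
    (hderiv1 : ∀ θ : ℝ, 0 < θ → HasDerivAt g (g' θ) θ)
    (hderiv2 : ∀ θ : ℝ, 0 < θ → HasDerivAt g' (g'' θ) θ)
    (hbound : ∀ θ : ℝ, 0 < θ → c₀ ≤ -θ * g'' θ ∧ -θ * g'' θ ≤ C₀) :
    Tendsto (fun θ => θ * g' θ) (𝓝[>] (0 : ℝ)) (𝓝 0) ∧
    ∃ h : ℝ → ℝ,
      (∀ θ : ℝ, 0 < θ → h θ = g θ - θ * g' θ) ∧
      h 0 = 0 ∧
      ContinuousWithinAt h (Ici (0 : ℝ)) 0 ∧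
      ∀ θ : ℝ, 0 ≤ θ → c₀ * θ ≤ h θ ∧ h θ ≤ C₀ * θ :=
  internal_energy_bounds_general c₀ C₀ g g' g'' hgcont hg0 hderiv1 hderiv2 hbound
end

section
/- Let E be a finite-dimensional real inner product space and (X, 𝒜, μ) a measure space, and let c₀, C₀ > 0. For each k ∈ ℕ let A_k : X → (continuous linear endomorphisms of E) and A : X → (continuous linear endomorphisms of E) be strongly measurable, and assume that for μ-a.e. x ∈ X: A_k(x) and A(x) are self-adjoint, ⟨A_k(x)v, v⟩ ≥ c₀‖v‖² and ‖A_k(x)v‖ ≤ C₀‖v‖ for all v ∈ E (and likewise for A(x)), and A_k(x) → A(x) as k → ∞. Let f_k, f ∈ L²(μ; E) with sup_k ‖f_k‖_{L²(μ;E)} < ∞, suppose f_k converges to f weakly in L²(μ;E) in the sense that ∫_X ⟨f_k, g⟩ dμ → ∫_X ⟨f, g⟩ dμ for every g ∈ L²(μ;E), and suppose ∫_X ⟨A_k f_k, f_k⟩ dμ → ∫_X ⟨A f, f⟩ dμ. Then ∫_X ‖f_k − f‖² dμ → 0, i.e. f_k → f strongly in L²(μ;E). -/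
/-!
Coercivity gives `c₀ ∫ ‖f_k - f‖² ≤ ∫ ⟪A_k (f_k - f), f_k - f⟫`, and by symmetry of `A_k` the
right-hand side is `∫ ⟪A_k f_k, f_k⟫ - 2 ∫ ⟪f_k, A_k f⟫ + ∫ ⟪f, A_k f⟫`. Dominated convergence
gives `A_k f → A f` strongly in `L²`; pairing it with the bounded, weakly convergent `f_k` (or with
the constant `f`) sends the last two integrals to `∫ ⟪f, A f⟫`, the limit of the first one.
-/

open MeasureTheory Filter Topology
open scoped RealInnerProductSpace ENNReal

theorem tendsto_inner_of_norm_le_of_tendsto_inner {𝕜 F ι : Type*} [RCLike 𝕜]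
    [NormedAddCommGroup F] [InnerProductSpace 𝕜 F] {l : Filter ι}
    {x y : ι → F} {x₀ y₀ : F} {M : ℝ} (hx : ∀ i, ‖x i‖ ≤ M)
    (hweak : Tendsto (fun i => inner 𝕜 (x i) y₀) l (𝓝 (inner 𝕜 x₀ y₀)))
    (hy : Tendsto y l (𝓝 y₀)) :
    Tendsto (fun i => inner 𝕜 (x i) (y i)) l (𝓝 (inner 𝕜 x₀ y₀)) := by
  have hsmall : Tendsto (fun i => inner 𝕜 (x i) (y i - y₀)) l (𝓝 0) := by
    refine squeeze_zero_norm (fun i => (norm_inner_le_norm _ _).trans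
      (mul_le_mul_of_nonneg_right (hx i) (norm_nonneg _))) ?_
    simpa using (tendsto_iff_norm_sub_tendsto_zero.1 hy).const_mul M
  simpa [inner_sub_right] using hsmall.add hweak

theorem LinearMap.IsSymmetric.inner_map_sub_sub {E : Type*} [NormedAddCommGroup E]
    [InnerProductSpace ℝ E] {T : E →ₗ[ℝ] E} (hT : T.IsSymmetric) (u w : E) :
    ⟪T (u - w), u - w⟫ = ⟪T u, u⟫ - 2 * ⟪u, T w⟫ + ⟪w, T w⟫ := by
  rw [map_sub, inner_sub_left, inner_sub_right, inner_sub_right, hT u w,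
    real_inner_comm u (T w), real_inner_comm w (T w)]
  ring

namespace MeasureTheory

section InnerProduct

variable {𝕜 E X : Type*} [RCLike 𝕜] [NormedAddCommGroup E] [InnerProductSpace 𝕜 E]
  [MeasurableSpace X] {μ : Measure X}

theorem MemLp.inner_toLp_toLp {u v : X → E} (hu : MemLp u 2 μ) (hv : MemLp v 2 μ) :
    inner 𝕜 (hu.toLp u) (hv.toLp v) = ∫ x, inner 𝕜 (u x) (v x) ∂μ := by
  rw [L2.inner_def]
  refine integral_congr_ae ?_
  filter_upwards [hu.coeFn_toLp, hv.coeFn_toLp] with x hux hvx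
  rw [hux, hvx]

theorem MemLp.integrable_inner {u v : X → E} (hu : MemLp u 2 μ) (hv : MemLp v 2 μ) :
    Integrable (fun x => inner 𝕜 (u x) (v x)) μ := by
  refine (L2.integrable_inner (hu.toLp u) (hv.toLp v)).congr ?_
  filter_upwards [hu.coeFn_toLp, hv.coeFn_toLp] with x hux hvx
  rw [hux, hvx]

end InnerProduct

theorem MemLp.clm_apply_of_bound {E F X : Type*} [NormedAddCommGroup E] [NormedSpace ℝ E]
    [NormedAddCommGroup F] [NormedSpace ℝ F] [MeasurableSpace X] {μ : Measure X} {p : ℝ≥0∞}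
    {B : X → E →L[ℝ] F} {u : X → E} {C : ℝ}
    (hB : AEStronglyMeasurable B μ) (hbound : ∀ᵐ x ∂μ, ∀ v, ‖B x v‖ ≤ C * ‖v‖)
    (hu : MemLp u p μ) : MemLp (fun x => B x (u x)) p μ :=
  hu.of_le_mul (isBoundedBilinearMap_apply.continuous.comp_aestronglyMeasurable₂ hB
    hu.aestronglyMeasurable) (hbound.mono fun x hx => hx (u x))

variable {E X : Type*} [NormedAddCommGroup E] [InnerProductSpace ℝ E]
  [MeasurableSpace X] {μ : Measure X}

theorem MemLp.norm_toLp_sq {u : X → E} (hu : MemLp u 2 μ) :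
    ‖hu.toLp u‖ ^ 2 = ∫ x, ‖u x‖ ^ 2 ∂μ := by
  simp_rw [← real_inner_self_eq_norm_sq, hu.inner_toLp_toLp hu]

theorem tendsto_toLp_of_dominated {u : ℕ → X → E} {v : X → E} {b : X → ℝ}
    (hu : ∀ k, MemLp (u k) 2 μ) (hv : MemLp v 2 μ) (hb : MemLp b 2 μ)
    (hbound : ∀ k, ∀ᵐ x ∂μ, ‖u k x‖ ≤ b x)
    (hlim : ∀ᵐ x ∂μ, Tendsto (fun k => u k x) atTop (𝓝 (v x))) :
    Tendsto (fun k => (hu k).toLp (u k)) atTop (𝓝 (hv.toLp v)) := by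
  have hv_sq := (memLp_two_iff_integrable_sq_norm hv.1).1 hv
  have hsq : Tendsto (fun k => ∫ x, ‖u k x - v x‖ ^ 2 ∂μ) atTop (𝓝 0) := by
    have hdom := tendsto_integral_of_dominated_convergence (F := fun k x => ‖u k x - v x‖ ^ 2)
      (f := 0) (fun x => 2 * (b x ^ 2 + ‖v x‖ ^ 2))
      (fun k => ((hu k).sub hv).aestronglyMeasurable.norm.pow 2)
      ((hb.integrable_sq.add hv_sq).const_mul 2) ?_ ?_
    · simpa using hdom
    · intro k
      filter_upwards [hbound k] with x hx
      have h_tri : ‖u k x - v x‖ ≤ b x + ‖v x‖ := (norm_sub_le _ _).trans (by linarith)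
      rw [Real.norm_of_nonneg (sq_nonneg _)]
      nlinarith [norm_nonneg (u k x - v x), sq_nonneg (b x - ‖v x‖)]
    · filter_upwards [hlim] with x hx
      simpa using ((hx.sub_const (v x)).norm.pow 2)
  have hnorm : ∀ k, ‖(hu k).toLp (u k) - hv.toLp v‖ = √(∫ x, ‖u k x - v x‖ ^ 2 ∂μ) := by
    intro k
    rw [← MemLp.toLp_sub, ← MemLp.norm_toLp_sq, Real.sqrt_sq (norm_nonneg _)]
    rfl
  rw [tendsto_iff_norm_sub_tendsto_zero]
  simpa [hnorm] using hsq.sqrt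

theorem mul_integral_norm_sub_sq_le {B : X → E →L[ℝ] E} {u w : X → E} {c C : ℝ}
    (hB : AEStronglyMeasurable B μ) (hsymm : ∀ᵐ x ∂μ, (B x : E →ₗ[ℝ] E).IsSymmetric)
    (hcoer : ∀ᵐ x ∂μ, ∀ v, c * ‖v‖ ^ 2 ≤ ⟪B x v, v⟫)
    (hbound : ∀ᵐ x ∂μ, ∀ v, ‖B x v‖ ≤ C * ‖v‖) (hu : MemLp u 2 μ) (hw : MemLp w 2 μ) :
    c * ∫ x, ‖u x - w x‖ ^ 2 ∂μ ≤
      ∫ x, ⟪B x (u x), u x⟫ ∂μ - 2 * ∫ x, ⟪u x, B x (w x)⟫ ∂μ + ∫ x, ⟪w x, B x (w x)⟫ ∂μ := by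
  have hBu := hu.clm_apply_of_bound hB hbound
  have hBw := hw.clm_apply_of_bound hB hbound
  have h₁ : Integrable (fun x => ⟪B x (u x), u x⟫) μ := hBu.integrable_inner hu
  have h₂ : Integrable (fun x => 2 * ⟪u x, B x (w x)⟫) μ := (hu.integrable_inner hBw).const_mul 2
  have h₃ : Integrable (fun x => ⟪w x, B x (w x)⟫) μ := hw.integrable_inner hBw
  have h₁₂ : Integrable (fun x => ⟪B x (u x), u x⟫ - 2 * ⟪u x, B x (w x)⟫) μ := h₁.sub h₂
  have hpointwise : ∀ᵐ x ∂μ, c * ‖u x - w x‖ ^ 2 ≤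
      ⟪B x (u x), u x⟫ - 2 * ⟪u x, B x (w x)⟫ + ⟪w x, B x (w x)⟫ := by
    filter_upwards [hsymm, hcoer] with x hx_symm hx_coer
    have hexpand := hx_symm.inner_map_sub_sub (u x) (w x)
    simp only [ContinuousLinearMap.coe_coe] at hexpand
    exact hexpand ▸ hx_coer (u x - w x)
  calc c * ∫ x, ‖u x - w x‖ ^ 2 ∂μ = ∫ x, c * ‖u x - w x‖ ^ 2 ∂μ :=
        (integral_const_mul _ _).symm
    _ ≤ ∫ x, (⟪B x (u x), u x⟫ - 2 * ⟪u x, B x (w x)⟫ + ⟪w x, B x (w x)⟫) ∂μ :=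
        integral_mono_ae (((memLp_two_iff_integrable_sq_norm (hu.sub hw).1).1
          (hu.sub hw)).const_mul c) (h₁₂.add h₃) hpointwise
    _ = _ := by rw [integral_add h₁₂ h₃, integral_sub h₁ h₂, integral_const_mul]

end MeasureTheory

theorem strong_L2_convergence_from_dissipation_general
    {E : Type*} [NormedAddCommGroup E] [InnerProductSpace ℝ E]
    {X : Type*} [MeasurableSpace X] (μ : Measure X)
    (c₀ C₀ : ℝ) (hc₀ : 0 < c₀)
    (A : ℕ → X → E →L[ℝ] E) (Alim : X → E →L[ℝ] E)
    (hAmeas : ∀ k, StronglyMeasurable (A k)) (hAlimmeas : StronglyMeasurable Alim)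
    (hae : ∀ᵐ x ∂μ,
      (∀ k, (∀ v w : E, ⟪A k x v, w⟫ = ⟪v, A k x w⟫) ∧
            (∀ v : E, c₀ * ‖v‖ ^ 2 ≤ ⟪A k x v, v⟫) ∧
            (∀ v : E, ‖A k x v‖ ≤ C₀ * ‖v‖)) ∧
      ((∀ v w : E, ⟪Alim x v, w⟫ = ⟪v, Alim x w⟫) ∧
        (∀ v : E, c₀ * ‖v‖ ^ 2 ≤ ⟪Alim x v, v⟫) ∧
        (∀ v : E, ‖Alim x v‖ ≤ C₀ * ‖v‖)) ∧
      Tendsto (fun k => A k x) atTop (𝓝 (Alim x)))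
    (f : ℕ → X → E) (flim : X → E)
    (hf : ∀ k, MemLp (f k) 2 μ) (hflim : MemLp flim 2 μ)
    (hbdd : ∃ M : ℝ≥0∞, M < ⊤ ∧ ∀ k, eLpNorm (f k) 2 μ ≤ M)
    (hweak : ∀ g : X → E, MemLp g 2 μ →
      Tendsto (fun k => ∫ x, ⟪f k x, g x⟫ ∂μ) atTop (𝓝 (∫ x, ⟪flim x, g x⟫ ∂μ)))
    (hdiss : Tendsto (fun k => ∫ x, ⟪A k x (f k x), f k x⟫ ∂μ) atTop
      (𝓝 (∫ x, ⟪Alim x (flim x), flim x⟫ ∂μ))) :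
    Tendsto (fun k => ∫ x, ‖f k x - flim x‖ ^ 2 ∂μ) atTop (𝓝 0) := by
  obtain ⟨M, hM_top, hM⟩ := hbdd
  have hA : ∀ k, ∀ᵐ x ∂μ, _ := fun k => hae.mono fun x hx => hx.1 k
  have hA_bound : ∀ k, ∀ᵐ x ∂μ, ∀ v, ‖A k x v‖ ≤ C₀ * ‖v‖ :=
    fun k => (hA k).mono fun x hx => hx.2.2
  have hAf : ∀ k, MemLp (fun x => A k x (flim x)) 2 μ :=
    fun k => hflim.clm_apply_of_bound (hAmeas k).aestronglyMeasurable (hA_bound k)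
  have hAlimf : MemLp (fun x => Alim x (flim x)) 2 μ :=
    hflim.clm_apply_of_bound hAlimmeas.aestronglyMeasurable (hae.mono fun x hx => hx.2.1.2.2)
  have hstrong : Tendsto (fun k => (hAf k).toLp _) atTop (𝓝 (hAlimf.toLp _)) :=
    tendsto_toLp_of_dominated hAf hAlimf (hflim.norm.const_mul C₀)
      (fun k => (hA_bound k).mono fun x hx => hx (flim x))
      (hae.mono fun x hx => ((continuous_eval_const (flim x)).tendsto _).comp hx.2.2)
  set L := ∫ x, ⟪flim x, Alim x (flim x)⟫ ∂μ
  have hmixed : Tendsto (fun k => ∫ x, ⟪f k x, A k x (flim x)⟫ ∂μ) atTop (𝓝 L) := by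
    have hF_norm : ∀ k, ‖(hf k).toLp (f k)‖ ≤ M.toReal :=
      fun k => (Lp.norm_toLp _ _).trans_le (ENNReal.toReal_mono hM_top.ne (hM k))
    have hweak' := hweak _ hAlimf
    simp only [← (hf _).inner_toLp_toLp hAlimf, ← hflim.inner_toLp_toLp hAlimf] at hweak'
    simpa only [(hf _).inner_toLp_toLp (hAf _), hflim.inner_toLp_toLp hAlimf] using
      tendsto_inner_of_norm_le_of_tendsto_inner hF_norm hweak' hstrong
  have hdiag : Tendsto (fun k => ∫ x, ⟪flim x, A k x (flim x)⟫ ∂μ) atTop (𝓝 L) := by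
    simpa only [hflim.inner_toLp_toLp (hAf _), hflim.inner_toLp_toLp hAlimf] using
      (tendsto_const_nhds (x := hflim.toLp flim)).inner (𝕜 := ℝ) hstrong
  have hL : ∫ x, ⟪Alim x (flim x), flim x⟫ ∂μ = L :=
    integral_congr_ae (ae_of_all _ fun x => real_inner_comm _ _)
  have henergy : Tendsto (fun k => (∫ x, ⟪A k x (f k x), f k x⟫ ∂μ
      - 2 * ∫ x, ⟪f k x, A k x (flim x)⟫ ∂μ + ∫ x, ⟪flim x, A k x (flim x)⟫ ∂μ) / c₀)
      atTop (𝓝 0) := by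
    have hlim := (((hL ▸ hdiss).sub (hmixed.const_mul 2)).add hdiag).div_const c₀
    rwa [show (L - 2 * L + L) / c₀ = 0 by ring] at hlim
  refine tendsto_of_tendsto_of_tendsto_of_le_of_le tendsto_const_nhds henergy
    (fun k => integral_nonneg fun x => sq_nonneg _) fun k => ?_
  rw [le_div_iff₀' hc₀]
  exact mul_integral_norm_sub_sq_le (hAmeas k).aestronglyMeasurable
    ((hA k).mono fun x hx => hx.1) ((hA k).mono fun x hx => hx.2.1) (hA_bound k) (hf k) hflim

/-- Weak convergence plus convergence of the dissipation upgrades to strong `L²`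
convergence, for uniformly elliptic, uniformly bounded, self-adjoint, pointwise
convergent coefficients. -/
theorem strong_L2_convergence_from_dissipation
    {E : Type*} [NormedAddCommGroup E] [InnerProductSpace ℝ E] [FiniteDimensional ℝ E]
    {X : Type*} [MeasurableSpace X] (μ : Measure X)
    (c₀ C₀ : ℝ) (hc₀ : 0 < c₀) (hC₀ : 0 < C₀)
    (A : ℕ → X → E →L[ℝ] E) (Alim : X → E →L[ℝ] E)
    (hAmeas : ∀ k, StronglyMeasurable (A k)) (hAlimmeas : StronglyMeasurable Alim)
    (hae : ∀ᵐ x ∂μ,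
      (∀ k, (∀ v w : E, ⟪A k x v, w⟫ = ⟪v, A k x w⟫) ∧
            (∀ v : E, c₀ * ‖v‖ ^ 2 ≤ ⟪A k x v, v⟫) ∧
            (∀ v : E, ‖A k x v‖ ≤ C₀ * ‖v‖)) ∧
      ((∀ v w : E, ⟪Alim x v, w⟫ = ⟪v, Alim x w⟫) ∧
        (∀ v : E, c₀ * ‖v‖ ^ 2 ≤ ⟪Alim x v, v⟫) ∧
        (∀ v : E, ‖Alim x v‖ ≤ C₀ * ‖v‖)) ∧
      Tendsto (fun k => A k x) atTop (𝓝 (Alim x)))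
    (f : ℕ → X → E) (flim : X → E)
    (hf : ∀ k, MemLp (f k) 2 μ) (hflim : MemLp flim 2 μ)
    (hbdd : ∃ M : ℝ≥0∞, M < ⊤ ∧ ∀ k, eLpNorm (f k) 2 μ ≤ M)
    (hweak : ∀ g : X → E, MemLp g 2 μ →
      Tendsto (fun k => ∫ x, ⟪f k x, g x⟫ ∂μ) atTop (𝓝 (∫ x, ⟪flim x, g x⟫ ∂μ)))
    (hdiss : Tendsto (fun k => ∫ x, ⟪A k x (f k x), f k x⟫ ∂μ) atTop
      (𝓝 (∫ x, ⟪Alim x (flim x), flim x⟫ ∂μ))) :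
    Tendsto (fun k => ∫ x, ‖f k x - flim x‖ ^ 2 ∂μ) atTop (𝓝 0) :=
  strong_L2_convergence_from_dissipation_general μ c₀ C₀ hc₀ A Alim hAmeas hAlimmeas hae f flim hf
    hflim hbdd hweak hdiss
end
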